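/- Let Y : [0,T] → [0,∞) be continuous, a ≥ 0, C₃, C₅ > 0, and h : [0,T] → [0,∞) non-decreasing with Y(t) ≤ e^{C₅t} h(t) + C₃ e^{C₅t} ∫₀ᵗ Y(s)² ds for all t. If C₃ ∫₀ᵀ e^{2C₅s} h(s) ds < 1, then for all t ∈ [0,T]: Y(t) ≤ e^{C₅t} h(t) · ( 1 - C₃ ∫₀ᵗ e^{2C₅s} h(s) ds )⁻¹. -/

import Mathlib

/-!
Put `x t = exp (-C₅ t) Y t` and `b s = C₃ exp (2 C₅ s)`; the hypothesis becomes the Bihari-type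
inequality `x t ≤ h t + ∫₀ᵗ b x²`. With `R t = ∫₀ᵗ b h < 1`, the function `u = h / (1 - R)` is a
supersolution, `h t + ∫₀ᵗ b u² ≤ u t`: as `h` is nondecreasing,
`∫₀ᵗ b u² ≤ h t ∫₀ᵗ R' / (1 - R)² ≤ h t ((1 - R t)⁻¹ - 1)`. Since `h` need not be continuous, `R` is
only differentiable almost everywhere (Lebesgue differentiation), and the last step is the bound
`∫ F' ≤ F t - F 0` for the monotone function `F = (1 - R)⁻¹`.

To compare `x` with `u`, note that the continuous gap `D = ∫₀ᵗ b x² - ∫₀ᵗ b u²` dominates `x - u`.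
As `x, u ≥ 0` and `x`, `b` are bounded, `b (x² - u²) ≤ K D⁺` for a constant `K`, so
`D⁺ ≤ K ∫₀ᵗ D⁺`, and the linear Grönwall inequality forces `D⁺ = 0`.
-/

open MeasureTheory intervalIntegral Set Topology

theorem eq_zero_of_le_const_mul_integral {f : ℝ → ℝ} {K T : ℝ} (hf : ContinuousOn f (Icc 0 T))
    (hf₀ : ∀ t ∈ Icc 0 T, 0 ≤ f t) (hle : ∀ t ∈ Icc 0 T, f t ≤ K * ∫ s in 0..t, f s) :
    ∀ t ∈ Icc 0 T, f t = 0 := by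
  intro t ht
  have hT : 0 ≤ T := ht.1.trans ht.2
  have hF₀ : ∀ τ ∈ Icc 0 T, 0 ≤ ∫ s in 0..τ, f s := fun τ hτ ↦
    integral_nonneg hτ.1 fun s hs ↦ hf₀ s ⟨hs.1, hs.2.trans hτ.2⟩
  have hF : ContinuousOn (fun t ↦ ∫ s in 0..t, f s) (Icc 0 T) := by
    simpa [uIcc_of_le hT] using
      continuousOn_primitive_interval' (hf.intervalIntegrable_of_Icc hT) left_mem_uIcc
  have hF' : ∀ x ∈ Ico 0 T, HasDerivWithinAt (fun t ↦ ∫ s in 0..t, f s) (f x) (Ici x) x := by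
    intro x hx
    have hnhds : Icc 0 T ∈ 𝓝[>] x := Icc_mem_nhdsGT_of_mem hx
    exact integral_hasDerivWithinAt_right
      ((hf.mono (Icc_subset_Icc_right hx.2.le)).intervalIntegrable_of_Icc hx.1)
      ((hf.stronglyMeasurableAtFilter_nhdsWithin measurableSet_Icc x).filter_mono
        (nhdsWithin_le_of_mem hnhds))
      ((hf x (Ico_subset_Icc_self hx)).mono_of_mem_nhdsWithin hnhds)
  have hF_zero := eq_zero_of_abs_deriv_le_mul_abs_self_of_eq_zero_right hF hF' integral_same
    fun x hx ↦ by
      rw [Real.norm_of_nonneg (hf₀ x (Ico_subset_Icc_self hx)),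
        Real.norm_of_nonneg (hF₀ x (Ico_subset_Icc_self hx))]
      exact hle x (Ico_subset_Icc_self hx)
  have := hle t ht
  rw [hF_zero t ht, mul_zero] at this
  exact this.antisymm (hf₀ t ht)

theorem monotoneOn_primitive_of_nonneg {g : ℝ → ℝ} {T : ℝ} (hg : IntervalIntegrable g volume 0 T)
    (hg₀ : ∀ s ∈ Icc 0 T, 0 ≤ g s) : MonotoneOn (fun t ↦ ∫ s in 0..t, g s) (Icc 0 T) :=
  fun t₁ ht₁ t₂ ht₂ h ↦ integral_mono_interval le_rfl ht₁.1 h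
    ((ae_restrict_iff' measurableSet_Ioc).2
      (.of_forall fun s hs ↦ hg₀ s ⟨hs.1.le, hs.2.trans ht₂.2⟩))
    (hg.mono_set (uIcc_subset_uIcc left_mem_uIcc (by rwa [uIcc_of_le (ht₂.1.trans ht₂.2)])))

theorem intervalIntegrable_mul_of_monotoneOn {f g : ℝ → ℝ} {T : ℝ} (hT : 0 ≤ T)
    (hf : ContinuousOn f (Icc 0 T)) (hg : MonotoneOn g (Icc 0 T)) :
    IntervalIntegrable (fun s ↦ f s * g s) volume 0 T := by
  rw [← uIcc_of_le hT] at hf hg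
  exact hg.intervalIntegrable.continuousOn_mul hf

theorem integral_div_one_sub_primitive_sq_le {g : ℝ → ℝ} {t : ℝ} (ht : 0 ≤ t)
    (hg : IntervalIntegrable g volume 0 t) (hg₀ : ∀ s ∈ Icc 0 t, 0 ≤ g s)
    (hlt : ∫ s in 0..t, g s < 1) :
    ∫ s in 0..t, g s / (1 - ∫ r in 0..s, g r) ^ 2 ≤ (1 - ∫ s in 0..t, g s)⁻¹ - 1 := by
  set G : ℝ → ℝ := fun s ↦ ∫ r in 0..s, g r
  have hG : MonotoneOn G (Icc 0 t) := monotoneOn_primitive_of_nonneg hg hg₀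
  have hden : ∀ s ∈ Icc 0 t, 0 < 1 - G s := fun s hs ↦
    sub_pos.2 ((hG hs ⟨ht, le_rfl⟩ hs.2).trans_lt hlt)
  set F : ℝ → ℝ := fun s ↦ (1 - G s)⁻¹
  have hF : MonotoneOn F (uIcc 0 t) := by
    rw [uIcc_of_le ht]
    exact fun s₁ hs₁ s₂ hs₂ h ↦ inv_anti₀ (hden s₂ hs₂) (by linarith [hG hs₁ hs₂ h])
  have hF' : ∀ᵐ s, s ∈ uIoc 0 t → deriv F s = g s / (1 - G s) ^ 2 := by
    filter_upwards [hg.ae_hasDerivAt_integral] with s hG' hs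
    have hs' : s ∈ Icc 0 t := by rw [← uIcc_of_le ht]; exact uIoc_subset_uIcc hs
    have := ((hG' (uIoc_subset_uIcc hs) 0 left_mem_uIcc).const_sub 1).inv (hden s hs').ne'
    exact this.deriv.trans (by ring)
  have hFt := hF.intervalIntegral_deriv_mem_uIcc
  rw [uIcc_of_le (sub_nonneg.2 (hF left_mem_uIcc right_mem_uIcc ht))] at hFt
  calc ∫ s in 0..t, g s / (1 - G s) ^ 2 = ∫ s in 0..t, deriv F s := (integral_congr_ae hF').symm
    _ ≤ F t - F 0 := hFt.2
    _ = (1 - G t)⁻¹ - 1 := by simp [F, G]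

theorem mul_sq_sub_mul_sq_le {b x u d M B : ℝ} (hb : 0 ≤ b) (hx : 0 ≤ x) (hu : 0 ≤ u)
    (hbB : b ≤ B) (hxM : x ≤ M) (hd : x - u ≤ d) :
    b * x ^ 2 - b * u ^ 2 ≤ 2 * M * B * max d 0 := by
  have hM : 0 ≤ M := hx.trans hxM
  have hB : 0 ≤ B := hb.trans hbB
  rcases le_or_gt x u with hxu | hxu
  · have : b * x ^ 2 ≤ b * u ^ 2 := by gcongr
    have : 0 ≤ 2 * M * B * max d 0 := by positivity
    linarith
  · calc b * x ^ 2 - b * u ^ 2 = b * ((x - u) * (x + u)) := by ring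
      _ ≤ B * (max d 0 * (2 * M)) := by
        gcongr
        · exact le_max_of_le_left hd
        · linarith
      _ = 2 * M * B * max d 0 := by ring

theorem le_of_le_add_integral_mul_sq {a b x u : ℝ → ℝ} {T : ℝ}
    (hx : ContinuousOn x (Icc 0 T)) (hx₀ : ∀ t ∈ Icc 0 T, 0 ≤ x t)
    (hu₀ : ∀ t ∈ Icc 0 T, 0 ≤ u t) (hb : ContinuousOn b (Icc 0 T))
    (hb₀ : ∀ t ∈ Icc 0 T, 0 ≤ b t) (hbu : IntervalIntegrable (fun s ↦ b s * u s ^ 2) volume 0 T)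
    (hx_le : ∀ t ∈ Icc 0 T, x t ≤ a t + ∫ s in 0..t, b s * x s ^ 2)
    (hu_ge : ∀ t ∈ Icc 0 T, a t + ∫ s in 0..t, b s * u s ^ 2 ≤ u t) :
    ∀ t ∈ Icc 0 T, x t ≤ u t := by
  intro t ht
  have hT : 0 ≤ T := ht.1.trans ht.2
  obtain ⟨M, hM⟩ := isCompact_Icc.exists_bound_of_continuousOn hx
  obtain ⟨B, hB⟩ := isCompact_Icc.exists_bound_of_continuousOn hb
  have hbx : IntervalIntegrable (fun s ↦ b s * x s ^ 2) volume 0 T :=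
    (hb.mul (hx.pow 2)).intervalIntegrable_of_Icc hT
  set D : ℝ → ℝ := fun τ ↦ (∫ s in 0..τ, b s * x s ^ 2) - ∫ s in 0..τ, b s * u s ^ 2
  have hD : ContinuousOn D (Icc 0 T) := by
    rw [← uIcc_of_le hT]
    exact (continuousOn_primitive_interval' hbx left_mem_uIcc).sub
      (continuousOn_primitive_interval' hbu left_mem_uIcc)
  have hgap : ∀ s ∈ Icc 0 T, x s - u s ≤ D s := fun s hs ↦ by
    linarith [hx_le s hs, hu_ge s hs]
  have hpt : ∀ s ∈ Icc 0 T, b s * x s ^ 2 - b s * u s ^ 2 ≤ 2 * M * B * max (D s) 0 :=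
    fun s hs ↦ mul_sq_sub_mul_sq_le (hb₀ s hs) (hx₀ s hs) (hu₀ s hs)
      ((Real.le_norm_self _).trans (hB s hs)) ((Real.le_norm_self _).trans (hM s hs)) (hgap s hs)
  have hK : 0 ≤ 2 * M * B := mul_nonneg
    (mul_nonneg zero_le_two ((norm_nonneg _).trans (hM t ht))) ((norm_nonneg _).trans (hB t ht))
  have hP : ∀ τ ∈ Icc 0 T, max (D τ) 0 ≤ 2 * M * B * ∫ s in 0..τ, max (D s) 0 := by
    intro τ hτ
    have hsub : uIcc 0 τ ⊆ uIcc 0 T :=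
      uIcc_subset_uIcc left_mem_uIcc (by rwa [uIcc_of_le hT])
    have hPint : IntervalIntegrable (fun s ↦ max (D s) 0) volume 0 τ :=
      ((hD.sup continuousOn_const).mono (Icc_subset_Icc_right hτ.2)).intervalIntegrable_of_Icc hτ.1
    refine max_le ?_ (mul_nonneg hK (integral_nonneg hτ.1 fun _ _ ↦ le_max_right _ _))
    calc D τ = ∫ s in 0..τ, (b s * x s ^ 2 - b s * u s ^ 2) :=
          (integral_sub (hbx.mono_set hsub) (hbu.mono_set hsub)).symm
      _ ≤ ∫ s in 0..τ, 2 * M * B * max (D s) 0 :=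
          integral_mono_on hτ.1 ((hbx.mono_set hsub).sub (hbu.mono_set hsub))
            (hPint.const_mul _) fun s hs ↦ hpt s (Icc_subset_Icc_right hτ.2 hs)
      _ = 2 * M * B * ∫ s in 0..τ, max (D s) 0 := intervalIntegral.integral_const_mul _ _
  have := eq_zero_of_le_const_mul_integral (hD.sup continuousOn_const)
    (fun _ _ ↦ le_max_right _ _) hP t ht
  linarith [hgap t ht, le_max_left (D t) 0]

structure BihariCoefficients (a b : ℝ → ℝ) (T : ℝ) : Prop where
  nonneg_a : ∀ t ∈ Icc 0 T, 0 ≤ a t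
  monotoneOn_a : MonotoneOn a (Icc 0 T)
  nonneg_b : ∀ t ∈ Icc 0 T, 0 ≤ b t
  continuousOn_b : ContinuousOn b (Icc 0 T)
  integral_lt_one : ∫ s in 0..T, b s * a s < 1

noncomputable def bihariBound (a b : ℝ → ℝ) (t : ℝ) : ℝ :=
  a t * (1 - ∫ s in 0..t, b s * a s)⁻¹

namespace BihariCoefficients

variable {a b : ℝ → ℝ} {T : ℝ} (H : BihariCoefficients a b T)
include H

theorem intervalIntegrable_mul {t : ℝ} (ht : t ∈ Icc 0 T) :
    IntervalIntegrable (fun s ↦ b s * a s) volume 0 t :=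
  intervalIntegrable_mul_of_monotoneOn ht.1 (H.continuousOn_b.mono (Icc_subset_Icc_right ht.2))
    (H.monotoneOn_a.mono (Icc_subset_Icc_right ht.2))

theorem monotoneOn_primitive : MonotoneOn (fun t ↦ ∫ s in 0..t, b s * a s) (Icc 0 T) :=
  fun _ ht₁ _ ht₂ ↦ monotoneOn_primitive_of_nonneg
    (H.intervalIntegrable_mul ⟨ht₂.1.trans ht₂.2, le_rfl⟩)
    (fun s hs ↦ mul_nonneg (H.nonneg_b s hs) (H.nonneg_a s hs)) ht₁ ht₂

theorem primitive_lt_one {t : ℝ} (ht : t ∈ Icc 0 T) : ∫ s in 0..t, b s * a s < 1 :=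
  (H.monotoneOn_primitive ht ⟨ht.1.trans ht.2, le_rfl⟩ ht.2).trans_lt H.integral_lt_one

theorem bihariBound_nonneg {t : ℝ} (ht : t ∈ Icc 0 T) : 0 ≤ bihariBound a b t :=
  mul_nonneg (H.nonneg_a t ht) (inv_nonneg.2 (sub_nonneg.2 (H.primitive_lt_one ht).le))

theorem monotoneOn_bihariBound : MonotoneOn (bihariBound a b) (Icc 0 T) :=
  H.monotoneOn_a.mul
    (fun _ ht₁ _ ht₂ h ↦ inv_anti₀ (sub_pos.2 (H.primitive_lt_one ht₂))
      (sub_le_sub_left (H.monotoneOn_primitive ht₁ ht₂ h) 1))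
    H.nonneg_a fun _ ht ↦ inv_nonneg.2 (sub_nonneg.2 (H.primitive_lt_one ht).le)

theorem intervalIntegrable_mul_bihariBound_sq {t : ℝ} (ht : t ∈ Icc 0 T) :
    IntervalIntegrable (fun s ↦ b s * bihariBound a b s ^ 2) volume 0 t := by
  have hsub : Icc 0 t ⊆ Icc 0 T := Icc_subset_Icc_right ht.2
  exact intervalIntegrable_mul_of_monotoneOn ht.1 (H.continuousOn_b.mono hsub)
    fun _ hs₁ _ hs₂ h ↦ pow_le_pow_left₀ (H.bihariBound_nonneg (hsub hs₁))
      (H.monotoneOn_bihariBound (hsub hs₁) (hsub hs₂) h) 2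

theorem add_integral_mul_bihariBound_sq_le {t : ℝ} (ht : t ∈ Icc 0 T) :
    a t + ∫ s in 0..t, b s * bihariBound a b s ^ 2 ≤ bihariBound a b t := by
  have hsub : Icc 0 t ⊆ Icc 0 T := Icc_subset_Icc_right ht.2
  set R : ℝ → ℝ := fun s ↦ ∫ r in 0..s, b r * a r
  have hden : ∀ s ∈ Icc 0 t, 0 < 1 - R s := fun s hs ↦ sub_pos.2 (H.primitive_lt_one (hsub hs))
  have hR : ContinuousOn R (Icc 0 t) := by
    simpa [uIcc_of_le ht.1] using
      continuousOn_primitive_interval' (H.intervalIntegrable_mul ht) left_mem_uIcc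
  have hpt : ∀ s ∈ Icc 0 t, b s * bihariBound a b s ^ 2 ≤ a t * (b s * a s / (1 - R s) ^ 2) := by
    intro s hs
    calc b s * bihariBound a b s ^ 2 = a s * (b s * a s / (1 - R s) ^ 2) := by
          simp only [bihariBound, R]; field_simp
      _ ≤ a t * (b s * a s / (1 - R s) ^ 2) :=
          mul_le_mul_of_nonneg_right (H.monotoneOn_a (hsub hs) ht hs.2)
            (div_nonneg (mul_nonneg (H.nonneg_b s (hsub hs)) (H.nonneg_a s (hsub hs)))
              (sq_nonneg _))
  have hint_ratio : IntervalIntegrable (fun s ↦ b s * a s / (1 - R s) ^ 2) volume 0 t := by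
    simpa only [div_eq_mul_inv] using (H.intervalIntegrable_mul ht).mul_continuousOn
      (by rw [uIcc_of_le ht.1]
          exact ((continuousOn_const.sub hR).pow 2).inv₀ fun s hs ↦ (pow_pos (hden s hs) 2).ne')
  calc a t + ∫ s in 0..t, b s * bihariBound a b s ^ 2
      ≤ a t + a t * ∫ s in 0..t, b s * a s / (1 - R s) ^ 2 := by
        rw [← intervalIntegral.integral_const_mul]
        exact add_le_add_right (integral_mono_on ht.1 (H.intervalIntegrable_mul_bihariBound_sq ht)
          (hint_ratio.const_mul _) hpt) _
    _ ≤ a t + a t * ((1 - R t)⁻¹ - 1) := by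
        gcongr
        · exact H.nonneg_a t ht
        · exact integral_div_one_sub_primitive_sq_le ht.1 (H.intervalIntegrable_mul ht)
            (fun s hs ↦ mul_nonneg (H.nonneg_b s (hsub hs)) (H.nonneg_a s (hsub hs)))
            (H.primitive_lt_one ht)
    _ = bihariBound a b t := by simp only [bihariBound, R]; ring

theorem le_bihariBound {x : ℝ → ℝ} (hx : ContinuousOn x (Icc 0 T)) (hx₀ : ∀ t ∈ Icc 0 T, 0 ≤ x t)
    (hx_le : ∀ t ∈ Icc 0 T, x t ≤ a t + ∫ s in 0..t, b s * x s ^ 2) :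
    ∀ t ∈ Icc 0 T, x t ≤ bihariBound a b t := fun t ht ↦
  le_of_le_add_integral_mul_sq hx hx₀ (fun _ ↦ H.bihariBound_nonneg) H.continuousOn_b
    H.nonneg_b (H.intervalIntegrable_mul_bihariBound_sq ⟨ht.1.trans ht.2, le_rfl⟩) hx_le
    (fun _ ↦ H.add_integral_mul_bihariBound_sq_le) t ht

end BihariCoefficients

theorem quadratic_gronwall_general
    (T C₃ C₅ : ℝ) (hC₃ : 0 < C₃)
    (Y h : ℝ → ℝ)
    (hYcont : ContinuousOn Y (Icc 0 T))
    (hYnonneg : ∀ t ∈ Icc (0:ℝ) T, 0 ≤ Y t)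
    (hhnonneg : ∀ t ∈ Icc (0:ℝ) T, 0 ≤ h t)
    (hhmono : ∀ s ∈ Icc (0:ℝ) T, ∀ t ∈ Icc (0:ℝ) T, s ≤ t → h s ≤ h t)
    (hineq : ∀ t ∈ Icc (0:ℝ) T,
      Y t ≤ Real.exp (C₅ * t) * h t
        + C₃ * Real.exp (C₅ * t) * ∫ s in (0:ℝ)..t, (Y s) ^ 2)
    (hsmall : C₃ * (∫ s in (0:ℝ)..T, Real.exp (2 * C₅ * s) * h s) < 1) :
    ∀ t ∈ Icc (0:ℝ) T,
      Y t ≤ Real.exp (C₅ * t) * h t *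
        (1 - C₃ * ∫ s in (0:ℝ)..t, Real.exp (2 * C₅ * s) * h s)⁻¹ := by
  set b : ℝ → ℝ := fun s ↦ C₃ * Real.exp (2 * C₅ * s)
  set x : ℝ → ℝ := fun s ↦ Real.exp (-(C₅ * s)) * Y s
  have hbh : ∀ t, ∫ s in 0..t, b s * h s = C₃ * ∫ s in 0..t, Real.exp (2 * C₅ * s) * h s :=
    fun t ↦ by simp only [b, mul_assoc]; exact intervalIntegral.integral_const_mul _ _
  have hbx : ∀ s, b s * x s ^ 2 = C₃ * Y s ^ 2 := fun s ↦ by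
    simp only [b, x, Real.exp_neg, show 2 * C₅ * s = C₅ * s + C₅ * s by ring, Real.exp_add]
    field_simp
  have H : BihariCoefficients h b T :=
    ⟨hhnonneg, fun s hs t ht ↦ hhmono s hs t ht, fun _ _ ↦ by positivity, by fun_prop,
      by rwa [hbh]⟩
  have hx_le : ∀ t ∈ Icc 0 T, x t ≤ h t + ∫ s in 0..t, b s * x s ^ 2 := by
    intro t ht
    simp only [hbx, intervalIntegral.integral_const_mul]
    calc x t ≤ Real.exp (-(C₅ * t)) * (Real.exp (C₅ * t) * h t
          + C₃ * Real.exp (C₅ * t) * ∫ s in 0..t, Y s ^ 2) :=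
          mul_le_mul_of_nonneg_left (hineq t ht) (Real.exp_pos _).le
      _ = h t + C₃ * ∫ s in 0..t, Y s ^ 2 := by rw [Real.exp_neg]; field_simp
  intro t ht
  have hxt := H.le_bihariBound (by fun_prop)
    (fun s hs ↦ mul_nonneg (Real.exp_pos _).le (hYnonneg s hs)) hx_le t ht
  rw [bihariBound, hbh] at hxt
  calc Y t = Real.exp (C₅ * t) * x t := by simp only [x, Real.exp_neg]; field_simp
    _ ≤ Real.exp (C₅ * t) * (h t * (1 - C₃ * ∫ s in 0..t, Real.exp (2 * C₅ * s) * h s)⁻¹) := by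
      gcongr
    _ = _ := by ring

/-- Nonlinear (quadratic) Grönwall/Bihari-type inequality used in the PNP
convergence proof. -/
theorem quadratic_gronwall
    (T C₃ C₅ : ℝ) (hT : 0 < T) (hC₃ : 0 < C₃) (hC₅ : 0 < C₅)
    (Y h : ℝ → ℝ)
    (hYcont : ContinuousOn Y (Icc 0 T))
    (hYnonneg : ∀ t ∈ Icc (0:ℝ) T, 0 ≤ Y t)
    (hhnonneg : ∀ t ∈ Icc (0:ℝ) T, 0 ≤ h t)
    (hhmono : ∀ s ∈ Icc (0:ℝ) T, ∀ t ∈ Icc (0:ℝ) T, s ≤ t → h s ≤ h t)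
    (hineq : ∀ t ∈ Icc (0:ℝ) T,
      Y t ≤ Real.exp (C₅ * t) * h t
        + C₃ * Real.exp (C₅ * t) * ∫ s in (0:ℝ)..t, (Y s) ^ 2)
    (hsmall : C₃ * (∫ s in (0:ℝ)..T, Real.exp (2 * C₅ * s) * h s) < 1) :
    ∀ t ∈ Icc (0:ℝ) T,
      Y t ≤ Real.exp (C₅ * t) * h t *
        (1 - C₃ * ∫ s in (0:ℝ)..t, Real.exp (2 * C₅ * s) * h s)⁻¹ :=
  quadratic_gronwall_general T C₃ C₅ hC₃ Y h hYcont hYnonneg hhnonneg hhmono hineq hsmall
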